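/- arXiv:1201.0435 — 2 statements merged into one kernel-verified Lean document; each statement's English description precedes it below -/
import Mathlib

section
/- If F is a capacity factor of a point-to-point network N=(V,E,s,t) with unit edge capacities, then the maximum s-t flow of N with F deleted equals the maximum s-t flow of N minus exactly 1. -/
/-- A point-to-point network: a finite directed multigraph with edge set
`edges`, endpoint maps `tail`/`head`, source `s` and sink `t`; every edge has
unit capacity. -/
structure Network (V : Type) (ε : Type) where
  edges : Finset ε
  tail : ε → V
  head : ε → V
  s : V
  t : V

namespace Network

variable {V ε : Type} [DecidableEq ε]

/-- `p` is a nonempty directed walk from `u` to `v` using edges of `N`. -/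
def IsWalk (N : Network V ε) (u v : V) (p : List ε) : Prop :=
  p ≠ [] ∧ (∀ e ∈ p, e ∈ N.edges) ∧
  (∀ i, ∀ h : i + 1 < p.length,
    N.head (p.get ⟨i, Nat.lt_of_succ_lt h⟩) = N.tail (p.get ⟨i + 1, h⟩)) ∧
  (∀ h : 0 < p.length, N.tail (p.get ⟨0, h⟩) = u) ∧
  (∀ h : 0 < p.length, N.head (p.get ⟨p.length - 1, Nat.sub_lt h Nat.one_pos⟩) = v)

/-- An `s`-`t` path: an edge-simple walk from the source to the sink. -/
def IsPath (N : Network V ε) (p : List ε) : Prop :=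
  N.IsWalk N.s N.t p ∧ p.Nodup

/-- `v` is reachable from `u` by a directed walk (or `u = v`). -/
def Reach (N : Network V ε) (u v : V) : Prop :=
  u = v ∨ ∃ p, N.IsWalk u v p

/-- Reachability within the subgraph induced by the vertex set `S`. -/
def ReachIn (N : Network V ε) (S : Set V) (u v : V) : Prop :=
  u = v ∨ ∃ p, N.IsWalk u v p ∧ ∀ e ∈ p, N.tail e ∈ S ∧ N.head e ∈ S

/-- An edge-simple directed cycle. -/
def IsCycle (N : Network V ε) (p : List ε) : Prop :=
  ∃ u, N.IsWalk u u p ∧ p.Nodup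

def Acyclic (N : Network V ε) : Prop := ∀ p, ¬ N.IsCycle p

/-- A collection of pairwise edge-disjoint `s`-`t` paths (an integral flow in a
unit-capacity network). -/
def IsFlowList (N : Network V ε) (fs : List (List ε)) : Prop :=
  (∀ p ∈ fs, N.IsPath p) ∧ fs.Pairwise fun p q => ∀ e ∈ p, e ∉ q

def HasFlow (N : Network V ε) (n : ℕ) : Prop :=
  ∃ fs, N.IsFlowList fs ∧ fs.length = n

/-- The maximum-flow value `C_N(s,t)`: the maximum number of pairwise
edge-disjoint directed `s`-`t` paths. -/
noncomputable def maxFlow (N : Network V ε) : ℕ :=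
  sSup {n | N.HasFlow n}

/-- Delete the edges of `F` from the network. -/
def del (N : Network V ε) (F : Finset ε) : Network V ε :=
  { N with edges := N.edges \ F }

/-- `F` is a `k`-th order capacity factor of `N`:
`C_{N\F} ≤ C_N − k`, and `C_{N\F'} > C_N − k` for every proper `F' ⊊ F`. -/
def IsKCF (N : Network V ε) (k : ℕ) (F : Finset ε) : Prop :=
  F.Nonempty ∧ F ⊆ N.edges ∧ (N.del F).maxFlow + k ≤ N.maxFlow ∧
    ∀ F' ⊂ F, N.maxFlow < (N.del F').maxFlow + k

/-- `F` is a capacity factor of `N`: deleting `F` decreases the maximum flow,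
while deleting any proper subset does not. -/
def IsCF (N : Network V ε) (F : Finset ε) : Prop :=
  F.Nonempty ∧ F ⊆ N.edges ∧ (N.del F).maxFlow < N.maxFlow ∧
    ∀ F' ⊂ F, (N.del F').maxFlow = N.maxFlow

/-- The set of edges used by a flow given as a list of paths. -/
def usedEdges (fs : List (List ε)) : Finset ε := fs.flatten.toFinset

/-- Residual network w.r.t. a set of used (unit-capacity) edges: used edges
are reversed, unused edges keep their direction. -/
def residual (N : Network V ε) (used : Finset ε) : Network V ε :=
  { edges := N.edges,
    tail := fun e => if e ∈ used then N.head e else N.tail e,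
    head := fun e => if e ∈ used then N.tail e else N.head e,
    s := N.s, t := N.t }

/-- The same network with sink replaced by `v`. -/
def withSink (N : Network V ε) (v : V) : Network V ε := { N with t := v }

end Network

open Network

/-! Pick `e ∈ F`. By minimality, deleting `F \ {e}` does not change the maximum flow, and
deleting the one further edge `e` destroys at most one path of a family of edge-disjoint
paths, so it lowers the maximum flow by at most one; by hypothesis it does lower it. -/

namespace List

variable {α : Type*}

theorem length_le_card_of_pairwise_disjoint {E : Finset α} {fs : List (List α)}
    (hfs : ∀ p ∈ fs, p ≠ [] ∧ ∀ e ∈ p, e ∈ E)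
    (hdisj : fs.Pairwise fun p q => ∀ e ∈ p, e ∉ q) : fs.length ≤ E.card := by
  classical
  induction hdisj generalizing E with
  | nil => simp
  | @cons p fs hp _ ih =>
    obtain ⟨hne, hpE⟩ := hfs p mem_cons_self
    obtain ⟨e, he⟩ := exists_mem_of_ne_nil p hne
    have hfs_erase : fs.length ≤ (E.erase e).card := ih fun q hq =>
      have hqE := hfs q (mem_cons_of_mem _ hq)
      ⟨hqE.1, fun x hx => Finset.mem_erase.2 ⟨fun hxe => hp q hq e he (hxe ▸ hx), hqE.2 x hx⟩⟩
    have := Finset.card_erase_lt_of_mem (hpE e he)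
    simp only [length_cons]
    omega

theorem length_le_length_filter_notMem_add_one [DecidableEq α] {fs : List (List α)} (e : α)
    (hdisj : fs.Pairwise fun p q => ∀ x ∈ p, x ∉ q) :
    fs.length ≤ (fs.filter (e ∉ ·)).length + 1 := by
  induction hdisj with
  | nil => simp
  | @cons p fs hp _ ih =>
    by_cases he : e ∈ p
    · have hfs : fs.filter (e ∉ ·) = fs :=
        filter_eq_self.2 fun q hq => by simpa using hp q hq e he
      rw [filter_cons_of_neg (by simpa using he), hfs, length_cons]
    · rw [filter_cons_of_pos (by simpa using he), length_cons, length_cons]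
      omega

end List

namespace Network

variable {V ε : Type}

theorem IsFlowList.length_le_card {N : Network V ε} {fs : List (List ε)} (h : N.IsFlowList fs) :
    fs.length ≤ N.edges.card :=
  List.length_le_card_of_pairwise_disjoint (fun p hp => ⟨(h.1 p hp).1.1, (h.1 p hp).1.2.1⟩) h.2

theorem hasFlow_zero (N : Network V ε) : N.HasFlow 0 :=
  ⟨[], ⟨by simp, List.Pairwise.nil⟩, rfl⟩

theorem bddAbove_setOf_hasFlow (N : Network V ε) : BddAbove {n | N.HasFlow n} := by
  refine ⟨N.edges.card, ?_⟩
  rintro _ ⟨fs, hfs, rfl⟩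
  exact hfs.length_le_card

theorem hasFlow_maxFlow (N : Network V ε) : N.HasFlow N.maxFlow :=
  Nat.sSup_mem ⟨0, N.hasFlow_zero⟩ N.bddAbove_setOf_hasFlow

theorem HasFlow.le_maxFlow {N : Network V ε} {n : ℕ} (h : N.HasFlow n) : n ≤ N.maxFlow :=
  le_csSup N.bddAbove_setOf_hasFlow h

variable [DecidableEq ε]

theorem del_del (N : Network V ε) (A B : Finset ε) : (N.del A).del B = N.del (A ∪ B) := by
  simp [del, sdiff_sdiff_left]

theorem IsPath.del {N : Network V ε} {p : List ε} (hp : N.IsPath p) {F : Finset ε}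
    (hpF : ∀ e ∈ p, e ∉ F) : (N.del F).IsPath p :=
  ⟨⟨hp.1.1, fun e he => Finset.mem_sdiff.2 ⟨hp.1.2.1 e he, hpF e he⟩, hp.1.2.2⟩, hp.2⟩

theorem maxFlow_le_maxFlow_del_singleton_add_one (N : Network V ε) (e : ε) :
    N.maxFlow ≤ (N.del {e}).maxFlow + 1 := by
  obtain ⟨fs, ⟨hpaths, hdisj⟩, hlen⟩ := N.hasFlow_maxFlow
  have hflow : (N.del {e}).HasFlow (fs.filter (e ∉ ·)).length := by
    refine ⟨_, ⟨fun p hp => ?_, hdisj.sublist List.filter_sublist⟩, rfl⟩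
    obtain ⟨hp, hep⟩ := List.mem_filter.1 hp
    have hep : e ∉ p := by simpa using hep
    exact (hpaths p hp).del fun x hx hxe => hep (Finset.mem_singleton.1 hxe ▸ hx)
  have hfilter := List.length_le_length_filter_notMem_add_one e hdisj
  have hle := hflow.le_maxFlow
  omega

end Network

/-- If `F` is a capacity factor of a unit-capacity point-to-point network, then
deleting `F` decreases the maximum flow by exactly 1. -/
theorem capacityFactor_maxFlow_sub_one {V ε : Type} [DecidableEq ε]
    (N : Network V ε) (F : Finset ε) (hF : N.IsCF F) :
    (N.del F).maxFlow + 1 = N.maxFlow := by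
  obtain ⟨⟨e, he⟩, -, hlt, hminimal⟩ := hF
  have hsplit : N.del F = (N.del (F.erase e)).del {e} := by
    rw [del_del, Finset.union_comm, ← Finset.insert_eq, Finset.insert_erase he]
  have hdrop := maxFlow_le_maxFlow_del_singleton_add_one (N.del (F.erase e)) e
  rw [hminimal _ (Finset.erase_ssubset he), ← hsplit] at hdrop
  omega
end

section
/- Let N=(V,E,s,t) be an acyclic unit-capacity point-to-point network, with topological labeling L:V→ℤ satisfying L(u) < L(v) for every edge ⟨u,v⟩. Let f be a flow decomposing N into C_N(s,t) edge-disjoint s-t paths, let e=⟨u_k,u_{k+1}⟩ lie on one such path p=(u_1,…,u_l), and let f' be f with path p removed. Then in the residual network of N\{e} with respect to f', there is no directed path from s to t. -/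
/-!
Let `c = L (head e)` and cut the vertices at level `c`: the source lies below it and the sink
at or above it, since labels increase along `p`. An `s`-`t` walk in the residual network must
therefore use an edge going up across level `c`. Reversed edges go down, so that edge is an
unused edge of `N \ {e}`; as `f` covers `N`, it lies on `p`. But labels increase strictly along
`p`, so `p` crosses level `c` only once, namely through `e`.
-/

namespace Network

variable {V ε : Type}

def walkVertex (M : Network V ε) (q : List ε) (v : V) (i : ℕ) : V :=
  if h : i < q.length then M.tail q[i] else v

section Walk

variable {M : Network V ε} {u v : V} {q : List ε}

theorem walkVertex_of_lt {i : ℕ} (h : i < q.length) : M.walkVertex q v i = M.tail q[i] :=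
  dif_pos h

theorem walkVertex_length : M.walkVertex q v q.length = v :=
  dif_neg (lt_irrefl _)

theorem IsWalk.walkVertex_zero (hq : M.IsWalk u v q) : M.walkVertex q v 0 = u := by
  have h0 : 0 < q.length := List.length_pos_iff.mpr hq.1
  rw [walkVertex_of_lt h0]
  exact hq.2.2.2.1 h0

theorem IsWalk.head_getElem (hq : M.IsWalk u v q) {i : ℕ} (h : i < q.length) :
    M.head q[i] = M.walkVertex q v (i + 1) := by
  by_cases h' : i + 1 < q.length
  · rw [walkVertex_of_lt h']
    exact hq.2.2.1 i h'
  · obtain rfl : i = q.length - 1 := by omega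
    rw [show q.length - 1 + 1 = q.length by omega, walkVertex_length]
    exact hq.2.2.2.2 (by omega)

theorem IsWalk.exists_mem_crossing {α : Type*} [LinearOrder α] (L : V → α) {c : α}
    (hq : M.IsWalk u v q) (hu : L u < c) (hv : c ≤ L v) :
    ∃ x ∈ q, L (M.tail x) < c ∧ c ≤ L (M.head x) := by
  let g : ℕ → α := fun i => L (M.walkVertex q v i)
  have hup : ∃ n, c ≤ g n := ⟨q.length, by simpa [g, walkVertex_length] using hv⟩
  have hpos : Nat.find hup ≠ 0 := fun h0 => by
    have := Nat.find_spec hup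
    rw [h0] at this
    exact (hu.trans_le (by simpa [g, hq.walkVertex_zero] using this)).false
  have hlt : Nat.find hup - 1 < q.length := by
    have := Nat.find_min' hup (show c ≤ g q.length by simpa [g, walkVertex_length] using hv)
    omega
  refine ⟨q[Nat.find hup - 1], List.getElem_mem hlt, ?_, ?_⟩
  · rw [← walkVertex_of_lt hlt]
    exact not_le.mp (Nat.find_min hup (by omega))
  · rw [hq.head_getElem hlt, Nat.sub_add_cancel (Nat.pos_of_ne_zero hpos)]
    exact Nat.find_spec hup

end Walk

section Labelled

variable {α : Type*} [LinearOrder α] {L : V → α} {N : Network V ε}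
  (hL : ∀ x ∈ N.edges, L (N.tail x) < L (N.head x))
  {u v : V} {p : List ε}
include hL

theorem IsWalk.strictMonoOn_label (hp : N.IsWalk u v p) :
    StrictMonoOn (fun i => L (N.walkVertex p v i)) (Set.Iic p.length) :=
  strictMonoOn_Iic_of_lt_succ fun i hi => by
    simpa only [Order.succ_eq_add_one, walkVertex_of_lt hi, hp.head_getElem hi] using
      hL _ (hp.2.1 _ (List.getElem_mem hi))

theorem IsWalk.label_le_tail_of_mem (hp : N.IsWalk u v p) {x : ε} (hx : x ∈ p) :
    L u ≤ L (N.tail x) := by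
  obtain ⟨i, hi, rfl⟩ := List.getElem_of_mem hx
  rw [← walkVertex_of_lt hi, ← hp.walkVertex_zero]
  exact (hp.strictMonoOn_label hL).monotoneOn (Nat.zero_le _) hi.le (Nat.zero_le _)

theorem IsWalk.label_head_le_of_mem (hp : N.IsWalk u v p) {x : ε} (hx : x ∈ p) :
    L (N.head x) ≤ L v := by
  obtain ⟨i, hi, rfl⟩ := List.getElem_of_mem hx
  have := (hp.strictMonoOn_label hL).monotoneOn (Set.mem_Iic.2 hi) (Set.mem_Iic.2 le_rfl) hi
  rwa [walkVertex_length, ← hp.head_getElem hi] at this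

/-- Labels increase strictly along the walk, so it crosses the level `L (N.head y)` only at `y`. -/
theorem IsWalk.eq_of_mem_of_crossing (hp : N.IsWalk u v p) {x y : ε} (hx : x ∈ p) (hy : y ∈ p)
    (hlt : L (N.tail x) < L (N.head y)) (hle : L (N.head y) ≤ L (N.head x)) : x = y := by
  obtain ⟨i, hi, rfl⟩ := List.getElem_of_mem hx
  obtain ⟨j, hj, rfl⟩ := List.getElem_of_mem hy
  have hmono := hp.strictMonoOn_label hL
  rw [← walkVertex_of_lt hi, hp.head_getElem hj] at hlt
  rw [hp.head_getElem hj, hp.head_getElem hi] at hle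
  have hij : i < j + 1 := (hmono.lt_iff_lt (Set.mem_Iic.2 hi.le) (Set.mem_Iic.2 hj)).1 hlt
  have hji : j ≤ i := by
    simpa using (hmono.le_iff_le (Set.mem_Iic.2 hj) (Set.mem_Iic.2 hi)).1 hle
  obtain rfl : i = j := by omega
  rfl

/-- Used edges are reversed in the residual network, so only unused edges go up in label. -/
theorem notMem_of_residual_crossing [DecidableEq ε] {used : Finset ε} {x : ε} {c : α}
    (hx : x ∈ N.edges)
    (hlt : L ((N.residual used).tail x) < c) (hle : c ≤ L ((N.residual used).head x)) :
    x ∉ used ∧ L (N.tail x) < c ∧ c ≤ L (N.head x) := by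
  by_cases hu : x ∈ used
  · simp only [residual, if_pos hu] at hlt hle
    exact absurd (hL x hx) (not_lt.2 (hlt.le.trans hle))
  · simp only [residual, if_neg hu] at hlt hle
    exact ⟨hu, hlt, hle⟩

end Labelled

theorem mem_of_notMem_usedEdges_erase [DecidableEq ε] {f : List (List ε)} {p : List ε} {x : ε}
    (hx : ∃ p' ∈ f, x ∈ p') (hxu : x ∉ usedEdges (f.erase p)) : x ∈ p := by
  obtain ⟨p', hp'f, hxp'⟩ := hx
  by_contra hxp
  have hne : p' ≠ p := by rintro rfl; exact hxp hxp'
  exact hxu <| List.mem_toFinset.2 <|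
    List.mem_flatten.2 ⟨p', (List.mem_erase_of_ne hne).2 hp'f, hxp'⟩

end Network

open Network

theorem no_augmenting_path_general {V ε : Type} [DecidableEq ε]
    (N : Network V ε) (L : V → ℤ)
    (hL : ∀ e ∈ N.edges, L (N.tail e) < L (N.head e))
    (f : List (List ε)) (hf : N.IsFlowList f)
    (hcover : ∀ e ∈ N.edges, ∃ p ∈ f, e ∈ p)
    (p : List ε) (hp : p ∈ f) (e : ε) (he : e ∈ p) :
    ¬ ∃ q, ((N.del {e}).residual (usedEdges (f.erase p))).IsWalk N.s N.t q := by
  rintro ⟨q, hq⟩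
  have hpw : N.IsWalk N.s N.t p := (hf.1 p hp).1
  have hs : L N.s < L (N.head e) :=
    (hpw.label_le_tail_of_mem hL he).trans_lt (hL e (hpw.2.1 e he))
  have ht : L (N.head e) ≤ L N.t := hpw.label_head_le_of_mem hL he
  obtain ⟨x, hxq, hlt, hle⟩ := hq.exists_mem_crossing L hs ht
  obtain ⟨hxN, hxe⟩ := Finset.mem_sdiff.1 (hq.2.1 x hxq)
  obtain ⟨hxu, hlt, hle⟩ :=
    notMem_of_residual_crossing (N := N.del {e}) (fun y hy => hL y (Finset.mem_sdiff.1 hy).1)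
      (Finset.mem_sdiff.2 ⟨hxN, hxe⟩) hlt hle
  have hxp : x ∈ p := mem_of_notMem_usedEdges_erase (hcover x hxN) hxu
  exact hxe (Finset.mem_singleton.2 (hpw.eq_of_mem_of_crossing hL hxp he hlt hle))

/-- In an acyclic network decomposed by a maximum flow `f` into edge-disjoint
`s`-`t` paths, if `e` lies on the path `p` of `f`, then the residual network of
`N \ {e}` w.r.t. the flow `f` with `p` removed has no directed `s`-`t` path. -/
theorem no_augmenting_path {V ε : Type} [DecidableEq ε]
    (N : Network V ε) (hA : N.Acyclic) (L : V → ℤ)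
    (hL : ∀ e ∈ N.edges, L (N.tail e) < L (N.head e))
    (f : List (List ε)) (hf : N.IsFlowList f) (hlen : f.length = N.maxFlow)
    (hcover : ∀ e ∈ N.edges, ∃ p ∈ f, e ∈ p)
    (p : List ε) (hp : p ∈ f) (e : ε) (he : e ∈ p) :
    ¬ ∃ q, ((N.del {e}).residual (usedEdges (f.erase p))).IsWalk N.s N.t q :=
  no_augmenting_path_general N L hL f hf hcover p hp e he
end
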